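/- Let q be a prime power and let λ ∈ GF(q²) with λ^{q+1} = −1. Then: (i) for any two nonzero vectors v, w ∈ GF(q²)² with v₁ = λ·v₀^q and w₁ = λ·w₀^q, there exists a 2×2 matrix C over GF(q²) with det C = 1 and C·(C^{(q)})ᵀ = I such that C·v = w; and (ii) every such matrix C maps the set { v ∈ GF(q²)² \ {0} : v₁ = λ·v₀^q } to itself. In other words, the orbits of SU₂(q) on the nonzero isotropic vectors of the Hermitian form X₀Y₀^q + X₁Y₁^q on GF(q²)² are precisely the sets on which v₁/v₀^q is constant. -/

import Mathlib

/-!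
Write `σ` for the involution `x ↦ x ^ q` of `GF(q²)` and `N t = t σ(t)`. The conditions
`det C = 1` and `C (C^σ)ᵀ = 1` force `C = [[a, b], [-σ b, σ a]]` with `N a + N b = 1`, and a
direct computation using `N λ = -1` shows that such a matrix preserves the relation
`v₁ = λ σ(v₀)`; its inverse has the same shape, so every fibre of `v ↦ v₁ / σ(v₀)` is mapped
onto itself. For transitivity, the first coordinate of `C v = w` forces `a` once `b` is chosen,
and `N a + N b = 1` then becomes a trace equation `s + σ s = N w₀ - N v₀` for
`s = b λ σ(v₀ w₀)`; it is solvable because the trace `t ↦ t + σ t` of `GF(q²)` onto `GF(q)` is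
onto (`X ^ q + X` has fewer than `q²` roots).
-/

open Matrix

section

variable {F : Type*} [Field F]

section Conjugation

variable (σ : F →+* F)

def su2Matrix (a b : F) : Matrix (Fin 2) (Fin 2) F := !![a, b; -σ b, σ a]

def isotropicFiber (lam : F) : Set (Fin 2 → F) := {v | v ≠ 0 ∧ v 1 = lam * σ (v 0)}

variable {σ}

theorem su2Matrix_mulVec (a b : F) (v : Fin 2 → F) :
    su2Matrix σ a b *ᵥ v = ![a * v 0 + b * v 1, -σ b * v 0 + σ a * v 1] := by
  ext i
  fin_cases i <;> simp [su2Matrix, mulVec, dotProduct, Fin.sum_univ_two]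

theorem det_su2Matrix (a b : F) : (su2Matrix σ a b).det = a * σ a + b * σ b := by
  rw [su2Matrix, det_fin_two_of]
  ring

theorem apply_zero_ne_zero_of_mem_isotropicFiber {lam : F} {v : Fin 2 → F}
    (hv : v ∈ isotropicFiber σ lam) : v 0 ≠ 0 := by
  intro h
  apply hv.1
  ext i
  fin_cases i <;> simp [h, hv.2]

variable (hσ : Function.Involutive σ)
include hσ

theorem map_transpose_su2Matrix (a b : F) :
    ((su2Matrix σ a b).map σ)ᵀ = su2Matrix σ (σ a) (-b) := by
  ext i j
  fin_cases i <;> fin_cases j <;> simp [su2Matrix, hσ _]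

theorem su2Matrix_mul_su2Matrix_apply_neg {a b : F} (hab : a * σ a + b * σ b = 1) :
    su2Matrix σ a b * su2Matrix σ (σ a) (-b) = 1 := by
  ext i j
  fin_cases i <;> fin_cases j <;> simp [su2Matrix, hσ _, mul_apply, Fin.sum_univ_two] <;>
    first | ring1 | linear_combination hab

theorem det_eq_one_and_mul_map_transpose_eq_one_iff (C : Matrix (Fin 2) (Fin 2) F) :
    C.det = 1 ∧ C * (C.map σ)ᵀ = 1 ↔ ∃ a b, a * σ a + b * σ b = 1 ∧ C = su2Matrix σ a b := by
  constructor
  · rintro ⟨hdet, hU⟩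
    have hadj : (C.map σ)ᵀ = C.adjugate := by
      rw [← inv_eq_right_inv hU, inv_def, hdet, Ring.inverse_one, one_smul]
    have h01 := congrFun₂ hadj 0 1
    have h00 := congrFun₂ hadj 0 0
    simp [adjugate_fin_two] at h01 h00
    have h10 : C 1 0 = -σ (C 0 1) := by rw [← map_neg, ← h01, hσ]
    have hC : C = su2Matrix σ (C 0 0) (C 0 1) := by
      ext i j
      fin_cases i <;> fin_cases j <;> simp [su2Matrix, h10, h00]
    refine ⟨C 0 0, C 0 1, ?_, hC⟩
    rw [← det_su2Matrix, ← hC, hdet]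
  · rintro ⟨a, b, hab, rfl⟩
    exact ⟨(det_su2Matrix a b).trans hab,
      (map_transpose_su2Matrix hσ a b).symm ▸ su2Matrix_mul_su2Matrix_apply_neg hσ hab⟩

theorem exists_add_apply_eq {z : F} (hz : z + σ z ≠ 0) {c : F} (hc : σ c = c) :
    ∃ t, t + σ t = c := by
  refine ⟨c * z / (z + σ z), ?_⟩
  rw [map_div₀, map_mul, map_add, hc, hσ, add_comm (σ z) z, ← add_div, ← mul_add,
    mul_div_cancel_right₀ _ hz]

variable {lam : F} (hlam : σ lam * lam = -1)
include hlam

theorem su2Matrix_mulVec_apply_one {v : Fin 2 → F} (a b : F) (hv : v 1 = lam * σ (v 0)) :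
    (su2Matrix σ a b *ᵥ v) 1 = lam * σ ((su2Matrix σ a b *ᵥ v) 0) := by
  simp only [su2Matrix_mulVec, hv, cons_val_zero, cons_val_one, map_add, map_mul, hσ _]
  linear_combination (-σ b * v 0) * hlam

theorem mapsTo_su2Matrix_mulVec_isotropicFiber {a b : F} (hab : a * σ a + b * σ b = 1) :
    Set.MapsTo (su2Matrix σ a b *ᵥ ·) (isotropicFiber σ lam) (isotropicFiber σ lam) := by
  rintro v ⟨hv0, hv⟩
  refine ⟨fun h => hv0 ?_, su2Matrix_mulVec_apply_one hσ hlam a b hv⟩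
  rw [← one_mulVec v, ← mul_eq_one_comm.mp (su2Matrix_mul_su2Matrix_apply_neg hσ hab),
    ← mulVec_mulVec, show su2Matrix σ a b *ᵥ v = 0 from h, mulVec_zero]

theorem image_su2Matrix_mulVec_isotropicFiber {a b : F} (hab : a * σ a + b * σ b = 1) :
    (su2Matrix σ a b *ᵥ ·) '' isotropicFiber σ lam = isotropicFiber σ lam := by
  have hab' : σ a * σ (σ a) + -b * σ (-b) = 1 := by simpa [hσ _, mul_comm] using hab
  refine Set.SurjOn.image_eq_of_mapsTo (Set.LeftInvOn.surjOn (f := (su2Matrix σ (σ a) (-b) *ᵥ ·))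
    (fun v _ => ?_) (mapsTo_su2Matrix_mulVec_isotropicFiber hσ hlam hab'))
    (mapsTo_su2Matrix_mulVec_isotropicFiber hσ hlam hab)
  simp only [mulVec_mulVec, su2Matrix_mul_su2Matrix_apply_neg hσ hab, one_mulVec]

theorem exists_su2Matrix_mulVec_eq (htr : ∀ c, σ c = c → ∃ t, t + σ t = c) {v w : Fin 2 → F}
    (hv : v ∈ isotropicFiber σ lam) (hw : w ∈ isotropicFiber σ lam) :
    ∃ a b, a * σ a + b * σ b = 1 ∧ su2Matrix σ a b *ᵥ v = w := by
  set x := v 0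
  set y := w 0
  have hx : x ≠ 0 := apply_zero_ne_zero_of_mem_isotropicFiber hv
  have hy : y ≠ 0 := apply_zero_ne_zero_of_mem_isotropicFiber hw
  have hlam0 : lam ≠ 0 := by rintro rfl; simp at hlam
  obtain ⟨t, ht⟩ := htr (y * σ y - x * σ x) (by simp only [map_sub, map_mul, hσ _]; ring)
  set b := t / (lam * σ x * σ y)
  set a := (y - b * lam * σ x) / x
  have ha : a * x = y - b * lam * σ x := div_mul_cancel₀ _ hx
  have haσ : σ a * σ x = σ y - σ b * σ lam * x := by
    simpa only [map_mul, map_sub, hσ _] using congrArg σ ha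
  have hb : b * (lam * σ x * σ y) = t := div_mul_cancel₀ _ (by simp [hlam0, hx, hy])
  have hbσ : σ b * (σ lam * x * y) = σ t := by
    simpa only [map_mul, hσ _] using congrArg σ hb
  have hab : a * σ a + b * σ b = 1 := by
    refine mul_right_cancel₀ (mul_ne_zero hx ((map_ne_zero σ).mpr hx)) ?_
    linear_combination (σ a * σ x) * ha + (y - b * lam * σ x) * haσ - hbσ - hb - ht +
      (b * σ b * x * σ x) * hlam
  refine ⟨a, b, hab, ?_⟩
  have h0 : (su2Matrix σ a b *ᵥ v) 0 = y := by
    rw [su2Matrix_mulVec, hv.2]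
    simp only [cons_val_zero]
    linear_combination ha
  ext i
  fin_cases i
  · exact h0
  · simp only [Fin.mk_one]
    rw [su2Matrix_mulVec_apply_one hσ hlam a b hv.2, h0, hw.2]

end Conjugation

theorem FiniteField.exists_add_pow_ne_zero [Fintype F] {q : ℕ} (hq : 1 < q)
    (hqF : q < Fintype.card F) :
    ∃ z : F, z + z ^ q ≠ 0 := by
  open Polynomial in
  have hdeg : (X ^ q + X : F[X]).natDegree = q := by
    rw [natDegree_add_eq_left_of_natDegree_lt] <;> simp [hq]
  obtain ⟨z, hz⟩ := (X ^ q + X : F[X]).exists_eval_ne_zero_of_natDegree_lt_card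
    (ne_zero_of_natDegree_gt (hdeg ▸ hq)) (by simpa [hdeg] using hqF)
  exact ⟨z, by simpa [add_comm] using hz⟩

theorem FiniteField.exists_ringHom_eq_pow [Fintype F] {q : ℕ} (hq : q ∣ Fintype.card F) :
    ∃ σ : F →+* F, ∀ x, σ x = x ^ q := by
  obtain ⟨p, _, n, hp, hcard⟩ := FiniteField.card' F
  have := Fact.mk hp
  obtain ⟨k, -, rfl⟩ := (Nat.dvd_prime_pow hp).mp (hcard ▸ hq)
  exact ⟨iterateFrobenius F p k, iterateFrobenius_def p k⟩

end

theorem statement_12_general (q : ℕ) (F : Type) [Field F] [Fintype F]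
    (hF : Fintype.card F = q ^ 2)
    (lam : F) (hlam : lam ^ (q + 1) = -1) :
    (∀ v w : Fin 2 → F, v ≠ 0 → w ≠ 0 →
      v 1 = lam * (v 0) ^ q → w 1 = lam * (w 0) ^ q →
      ∃ C : Matrix (Fin 2) (Fin 2) F,
        C.det = 1 ∧ C * (C.map (· ^ q))ᵀ = 1 ∧ C.mulVec v = w) ∧
    (∀ C : Matrix (Fin 2) (Fin 2) F, C.det = 1 → C * (C.map (· ^ q))ᵀ = 1 →
      C.mulVec '' {v : Fin 2 → F | v ≠ 0 ∧ v 1 = lam * (v 0) ^ q} =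
        {v : Fin 2 → F | v ≠ 0 ∧ v 1 = lam * (v 0) ^ q}) := by
  have hq : 1 < q := by
    have := Fintype.one_lt_card (α := F)
    rw [hF] at this
    exact (one_lt_pow_iff_of_nonneg (Nat.zero_le q) two_ne_zero).mp this
  obtain ⟨σ, hσq⟩ := FiniteField.exists_ringHom_eq_pow (hF ▸ dvd_pow_self q two_ne_zero)
  have hσ : Function.Involutive σ := fun x => by
    rw [hσq, hσq, ← pow_mul, ← sq, ← hF, FiniteField.pow_card]
  have hlamσ : σ lam * lam = -1 := by rw [hσq, ← pow_succ, hlam]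
  obtain ⟨z, hz⟩ := FiniteField.exists_add_pow_ne_zero hq (by rw [hF]; nlinarith)
  have hmap : (· ^ q) = ⇑σ := funext fun x => (hσq x).symm
  have hfiber : {v : Fin 2 → F | v ≠ 0 ∧ v 1 = lam * v 0 ^ q} = isotropicFiber σ lam := by
    simp only [isotropicFiber, hσq]
  rw [hmap, hfiber]
  refine ⟨fun v w hv hw hv1 hw1 => ?_, fun C hdet hU => ?_⟩
  · obtain ⟨a, b, hab, hvw⟩ := exists_su2Matrix_mulVec_eq hσ hlamσ
      (fun c hc => exists_add_apply_eq hσ (by rwa [hσq]) hc)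
      (show v ∈ isotropicFiber σ lam from ⟨hv, hσq _ ▸ hv1⟩) ⟨hw, hσq _ ▸ hw1⟩
    obtain ⟨hdet, hU⟩ := (det_eq_one_and_mul_map_transpose_eq_one_iff hσ _).mpr ⟨a, b, hab, rfl⟩
    exact ⟨su2Matrix σ a b, hdet, hU, hvw⟩
  · obtain ⟨a, b, hab, rfl⟩ := (det_eq_one_and_mul_map_transpose_eq_one_iff hσ C).mp ⟨hdet, hU⟩
    exact image_su2Matrix_mulVec_isotropicFiber hσ hlamσ hab

/-- The orbits of `SU₂(q)` on the nonzero isotropic vectors of the Hermitian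
form `X₀Y₀^q + X₁Y₁^q` on `GF(q²)²` are exactly the sets on which `v₁/v₀^q` is constant. -/
theorem statement_12 (q : ℕ) (hq : IsPrimePow q) (F : Type) [Field F] [Fintype F]
    (hF : Fintype.card F = q ^ 2)
    (lam : F) (hlam : lam ^ (q + 1) = -1) :
    (∀ v w : Fin 2 → F, v ≠ 0 → w ≠ 0 →
      v 1 = lam * (v 0) ^ q → w 1 = lam * (w 0) ^ q →
      ∃ C : Matrix (Fin 2) (Fin 2) F,
        C.det = 1 ∧ C * (C.map (· ^ q))ᵀ = 1 ∧ C.mulVec v = w) ∧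
    (∀ C : Matrix (Fin 2) (Fin 2) F, C.det = 1 → C * (C.map (· ^ q))ᵀ = 1 →
      C.mulVec '' {v : Fin 2 → F | v ≠ 0 ∧ v 1 = lam * (v 0) ^ q} =
        {v : Fin 2 → F | v ≠ 0 ∧ v 1 = lam * (v 0) ^ q}) :=
  statement_12_general q F hF lam hlam
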